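/- Let I = (0,1), -1 < β ≤ 0, 1 ≤ p < ∞. If x^α ∈ QB_{β,p}(I), then there exists ε with 0 < ε < p(β+1) such that x^α ∈ QB_{β,p-ε}(I). -/

import Mathlib

open MeasureTheory Set Real Filter
open scoped ENNReal

noncomputable section

/-- `w` satisfies the `QB_{β,p}` inequality on `(0,∞)` with constant `C`. -/
def QBcond (β p C : ℝ) (w : ℝ → ℝ) : Prop :=
  ∀ r : ℝ, 0 < r →
    (∫ x in Ioi r, (r / x) ^ p * w x) ≤ C * ∫ x in Ioc (0:ℝ) r, (x / r) ^ (β * p) * w x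

/-- `w ∈ QB_{β,p}`. -/
def QB (β p : ℝ) (w : ℝ → ℝ) : Prop := ∃ C : ℝ, 0 < C ∧ QBcond β p C w

/-- The `QB_{β,p}` constant `[w]_{QB_{β,p}}`. -/
def QBconst (β p : ℝ) (w : ℝ → ℝ) : ℝ := sInf {D : ℝ | QBcond β p (D - 1) w}

/-- `f ∈ Q_β`: `f ≥ 0` and `x^{-β} f x` is non-increasing on `(0,∞)`. -/
def Qmono (β : ℝ) (f : ℝ → ℝ) : Prop :=
  (∀ x, 0 ≤ f x) ∧ AntitoneOn (fun x => x ^ (-β) * f x) (Ioi (0:ℝ))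

/-- A weight: nonnegative and integrable on `(0,r]` for every `r > 0`. -/
def IsWeight (w : ℝ → ℝ) : Prop :=
  (∀ x, 0 ≤ w x) ∧ ∀ r : ℝ, 0 < r → IntegrableOn w (Ioc 0 r)

/-- `Ψ(x) = ∫_0^x ψ`. -/
def Psi (ψ : ℝ → ℝ) (x : ℝ) : ℝ := ∫ t in Ioc (0:ℝ) x, ψ t

/-- `w` satisfies the `QB_{β,ψ,p}` inequality with constant `C`. -/
def QBpsiCond (β p C : ℝ) (ψ w : ℝ → ℝ) : Prop :=
  ∀ r : ℝ, 0 < r →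
    (∫ x in Ioi r, (Psi ψ r / Psi ψ x) ^ p * w x)
      ≤ C * ∫ x in Ioc (0:ℝ) r, (Psi ψ x / Psi ψ r) ^ (β * p) * w x

/-- `w ∈ QB_{β,ψ,p}`. -/
def QBpsi (β p : ℝ) (ψ w : ℝ → ℝ) : Prop := ∃ C : ℝ, 0 < C ∧ QBpsiCond β p C ψ w

/-- The `QB_{β,ψ,p}` constant. -/
def QBpsiConst (β p : ℝ) (ψ w : ℝ → ℝ) : ℝ := sInf {D : ℝ | QBpsiCond β p (D - 1) ψ w}

/-- `w` satisfies the `QB_{β,p}(I)` inequality on `I = (0,1)` with constant `C`. -/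
def QBIcond (β p C : ℝ) (w : ℝ → ℝ) : Prop :=
  ∀ r : ℝ, 0 < r → r ≤ 1 →
    (∫ x in Ioc r (1:ℝ), (r / x) ^ p * w x) ≤ C * ∫ x in Ioc (0:ℝ) r, (x / r) ^ (β * p) * w x

/-- `w ∈ QB_{β,p}(I)`. -/
def QBI (β p : ℝ) (w : ℝ → ℝ) : Prop := ∃ C : ℝ, 0 < C ∧ QBIcond β p C w

/-- The `QB_{β,p}(I)` constant. -/
def QBIconst (β p : ℝ) (w : ℝ → ℝ) : ℝ := sInf {D : ℝ | QBIcond β p (D - 1) w}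

/-- `f ∈ Q_β(I)`: `f ≥ 0` and `x^{-β} f x` non-increasing on `(0,1)`. -/
def QmonoI (β : ℝ) (f : ℝ → ℝ) : Prop :=
  (∀ x, 0 ≤ f x) ∧ AntitoneOn (fun x => x ^ (-β) * f x) (Ioo (0:ℝ) 1)

/-- The Hardy averaging operator. -/
def Hardy (f : ℝ → ℝ) (x : ℝ) : ℝ := (1 / x) * ∫ t in Ioc (0:ℝ) x, f t

/-- The weighted grand Lebesgue norm `‖f‖_{L_w^{p),θ}(I)}` on `I = (0,1)`. -/
def grandNorm (p θ : ℝ) (w f : ℝ → ℝ) : ℝ≥0∞ :=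
  ⨆ ε ∈ Ioo (0:ℝ) (p - 1),
    (ENNReal.ofReal (ε ^ θ) *
      ∫⁻ x in Ioo (0:ℝ) 1, ENNReal.ofReal (|f x| ^ (p - ε) * w x)) ^ (1 / (p - ε))

/-!
For a power weight both sides of the `QB_{β,q}(I)` inequality can be computed: the right side
is `r^(α+1) / (βq+α+1)` when `βq+α > -1` (and the integral diverges otherwise), while the left
side is `(r^(α+1) - r^q) / (q-α-1) ≤ r^(α+1) / (q-α-1)` when `α+1 < q` and at least
`r^(α+1) · log (1/r)` otherwise. Hence `x^α ∈ QB_{β,q}(I)` iff `-1 < βq+α` and `α+1 < q`,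
and these two strict inequalities persist when `q` is lowered slightly.
-/

open Topology

section PowerIntegrals

variable {s r : ℝ}

lemma integral_Ioc_zero_rpow (hs : -1 < s) (hr : 0 < r) :
    ∫ x in Ioc 0 r, x ^ s = r ^ (s + 1) / (s + 1) := by
  rw [← intervalIntegral.integral_of_le hr.le, integral_rpow (Or.inl hs),
    zero_rpow (by linarith), sub_zero]

lemma integral_Ioc_zero_rpow_of_le_neg_one (hs : s ≤ -1) (hr : 0 < r) :
    ∫ x in Ioc 0 r, x ^ s = 0 := by
  refine integral_undef fun h => ?_
  have := (intervalIntegral.integrableOn_Ioo_rpow_iff hr).mp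
    ((integrableOn_Ioc_iff_integrableOn_Ioo).mp h)
  linarith

lemma intervalIntegrable_rpow_of_pos (hr : 0 < r) :
    IntervalIntegrable (fun x : ℝ => x ^ s) volume r 1 :=
  intervalIntegral.intervalIntegrable_rpow (Or.inr (notMem_uIcc_of_lt hr one_pos))

lemma integral_Ioc_one_rpow (hs : s ≠ -1) (hr : 0 < r) (hr1 : r ≤ 1) :
    ∫ x in Ioc r 1, x ^ s = (1 - r ^ (s + 1)) / (s + 1) := by
  rw [← intervalIntegral.integral_of_le hr1,
    integral_rpow (Or.inr ⟨hs, notMem_uIcc_of_lt hr one_pos⟩), one_rpow]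

lemma integral_Ioc_one_rpow_pos (hr : 0 < r) (hr1 : r < 1) :
    0 < ∫ x in Ioc r 1, x ^ s := by
  rw [← intervalIntegral.integral_of_le hr1.le]
  exact intervalIntegral.intervalIntegral_pos_of_pos_on (intervalIntegrable_rpow_of_pos hr)
    (fun x hx => rpow_pos_of_pos (hr.trans hx.1) s) hr1

/-- Comparison with `∫_r^1 dx/x = log (1/r)`, using `x^(s+1) ≥ r^(s+1)` on `[r, 1]`. -/
lemma rpow_add_one_mul_neg_log_le_integral (hs : -1 ≤ s) (hr : 0 < r) (hr1 : r ≤ 1) :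
    r ^ (s + 1) * -log r ≤ ∫ x in Ioc r 1, x ^ s := by
  have hinv : ∫ x in Ioc r 1, x⁻¹ = -log r := by
    rw [← intervalIntegral.integral_of_le hr1, integral_inv (notMem_uIcc_of_lt hr one_pos),
      one_div, log_inv]
  have hinv_int : IntegrableOn (fun x : ℝ => x⁻¹) (Ioc r 1) := by
    simpa [rpow_neg_one] using (intervalIntegrable_rpow_of_pos (s := -1) hr).1
  rw [← hinv, ← integral_const_mul]
  refine setIntegral_mono_on (hinv_int.const_mul _) (intervalIntegrable_rpow_of_pos hr).1
    measurableSet_Ioc fun x hx => ?_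
  have hx0 : 0 < x := hr.trans hx.1
  calc r ^ (s + 1) * x⁻¹ ≤ x ^ (s + 1) * x⁻¹ := by
        gcongr
        · linarith
        · exact hx.1.le
    _ = x ^ s := by rw [rpow_add_one hx0.ne', mul_inv_cancel_right₀ hx0.ne']

end PowerIntegrals

section PowerWeight

variable {β q α r : ℝ}

lemma setIntegral_Ioc_div_rpow_mul_rpow (hr : 0 < r) :
    ∫ x in Ioc r 1, (r / x) ^ q * x ^ α = r ^ q * ∫ x in Ioc r 1, x ^ (α - q) := by
  rw [← integral_const_mul]
  refine setIntegral_congr_fun measurableSet_Ioc fun x hx => ?_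
  have hx0 : 0 < x := hr.trans hx.1
  rw [div_rpow hr.le hx0.le, rpow_sub hx0]
  field_simp

lemma setIntegral_Ioc_zero_div_rpow_mul_rpow (hr : 0 < r) :
    ∫ x in Ioc 0 r, (x / r) ^ q * x ^ α = r ^ (-q) * ∫ x in Ioc 0 r, x ^ (q + α) := by
  rw [← integral_const_mul]
  refine setIntegral_congr_fun measurableSet_Ioc fun x hx => ?_
  rw [div_rpow hx.1.le hr.le, rpow_add hx.1, rpow_neg hr.le]
  ring

lemma setIntegral_Ioc_zero_div_rpow_mul_rpow_eq (h : -1 < q + α) (hr : 0 < r) :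
    ∫ x in Ioc 0 r, (x / r) ^ q * x ^ α = r ^ (α + 1) / (q + α + 1) := by
  rw [setIntegral_Ioc_zero_div_rpow_mul_rpow hr, integral_Ioc_zero_rpow h hr, ← mul_div_assoc,
    ← rpow_add hr]
  ring_nf

lemma setIntegral_Ioc_div_rpow_mul_rpow_eq (h : α + 1 ≠ q) (hr : 0 < r) (hr1 : r ≤ 1) :
    ∫ x in Ioc r 1, (r / x) ^ q * x ^ α = (r ^ (α + 1) - r ^ q) / (q - α - 1) := by
  have hs : α - q ≠ -1 := fun h' => h (by linarith)
  rw [setIntegral_Ioc_div_rpow_mul_rpow hr, integral_Ioc_one_rpow hs hr hr1, mul_div_assoc',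
    mul_sub, mul_one, ← rpow_add hr,
    div_eq_div_iff (fun h' => hs (by linarith)) (fun h' => h (by linarith))]
  ring_nf

lemma qbiCond_rpow (h₁ : -1 < β * q + α) (h₂ : α + 1 < q) :
    QBIcond β q ((β * q + α + 1) / (q - α - 1)) (fun x => x ^ α) := by
  intro r hr hr1
  rw [setIntegral_Ioc_div_rpow_mul_rpow_eq h₂.ne hr hr1,
    setIntegral_Ioc_zero_div_rpow_mul_rpow_eq h₁ hr]
  have hC : (β * q + α + 1) / (q - α - 1) * (r ^ (α + 1) / (β * q + α + 1)) =
      r ^ (α + 1) / (q - α - 1) := by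
    field_simp [(by linarith : β * q + α + 1 ≠ 0)]
  rw [hC]
  exact div_le_div_of_nonneg_right (by linarith [rpow_pos_of_pos hr q]) (by linarith)

lemma neg_one_lt_of_qbi_rpow (h : QBI β q (fun x => x ^ α)) : -1 < β * q + α := by
  by_contra! hle
  obtain ⟨C, -, hC⟩ := h
  -- the divergent right side is Bochner's junk value `0`, the left side is positive
  have hhalf := hC (1 / 2) (by norm_num) (by norm_num)
  rw [setIntegral_Ioc_div_rpow_mul_rpow (by norm_num), setIntegral_Ioc_zero_div_rpow_mul_rpow
    (by norm_num), integral_Ioc_zero_rpow_of_le_neg_one hle (by norm_num), mul_zero,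
    mul_zero] at hhalf
  have := mul_pos (rpow_pos_of_pos (by norm_num : (0 : ℝ) < 1 / 2) q)
    (integral_Ioc_one_rpow_pos (s := α - q) (r := 1 / 2) (by norm_num) (by norm_num))
  linarith

lemma add_one_lt_of_qbi_rpow (h : QBI β q (fun x => x ^ α)) : α + 1 < q := by
  have h₁ := neg_one_lt_of_qbi_rpow h
  obtain ⟨C, hC0, hC⟩ := h
  by_contra! hle
  set K := C / (β * q + α + 1)
  have hK : 0 ≤ K := div_nonneg hC0.le (by linarith)
  have hlog : ∀ r, 0 < r → r ≤ 1 → -log r ≤ K := by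
    intro r hr hr1
    refine le_of_mul_le_mul_left ?_ (rpow_pos_of_pos hr (α + 1))
    calc r ^ (α + 1) * -log r = r ^ q * (r ^ (α - q + 1) * -log r) := by
          rw [← mul_assoc, ← rpow_add hr]; ring_nf
      _ ≤ r ^ q * ∫ x in Ioc r 1, x ^ (α - q) := by
          gcongr
          exact rpow_add_one_mul_neg_log_le_integral (by linarith) hr hr1
      _ = ∫ x in Ioc r 1, (r / x) ^ q * x ^ α := (setIntegral_Ioc_div_rpow_mul_rpow hr).symm
      _ ≤ C * ∫ x in Ioc 0 r, (x / r) ^ (β * q) * x ^ α := hC r hr hr1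
      _ = r ^ (α + 1) * K := by
          rw [setIntegral_Ioc_zero_div_rpow_mul_rpow_eq h₁ hr]; ring
  have := hlog (exp (-(K + 1))) (exp_pos _) (exp_le_one_iff.mpr (by linarith))
  rw [log_exp] at this
  linarith

lemma qbi_rpow_iff : QBI β q (fun x => x ^ α) ↔ -1 < β * q + α ∧ α + 1 < q := by
  refine ⟨fun h => ⟨neg_one_lt_of_qbi_rpow h, add_one_lt_of_qbi_rpow h⟩, fun ⟨h₁, h₂⟩ => ?_⟩
  exact ⟨_, div_pos (by linarith) (by linarith), qbiCond_rpow h₁ h₂⟩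

end PowerWeight

theorem power_weight_openness_I_general (p β α : ℝ)
    (hQB : QBI β p (fun x => x ^ α)) :
    ∃ ε : ℝ, 0 < ε ∧ ε < p * (β + 1) ∧ QBI β (p - ε) (fun x => x ^ α) := by
  obtain ⟨h₁, h₂⟩ := qbi_rpow_iff.mp hQB
  have hpos : 0 < p * (β + 1) := by linarith
  have hnear : ∀ᶠ ε in 𝓝 (0 : ℝ), ε < p * (β + 1) ∧ -1 < β * (p - ε) + α ∧ α + 1 < p - ε := by
    refine (eventually_lt_nhds hpos).and (Eventually.and ?_ ?_)
    · exact ((by fun_prop : Continuous fun ε : ℝ => β * (p - ε) + α).tendsto 0)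
        |>.eventually_const_lt (by simpa using h₁)
    · exact ((by fun_prop : Continuous fun ε : ℝ => p - ε).tendsto 0)
        |>.eventually_const_lt (by simpa using h₂)
  obtain ⟨ε, ⟨hε, hq⟩, hε0⟩ :=
    ((hnear.filter_mono nhdsWithin_le_nhds).and
      (self_mem_nhdsWithin : Ioi (0 : ℝ) ∈ 𝓝[>] 0)).exists
  exact ⟨ε, hε0, hε, qbi_rpow_iff.mpr hq⟩

theorem power_weight_openness_I (p β α : ℝ) (hp : 1 ≤ p) (hβ1 : -1 < β) (hβ0 : β ≤ 0)
    (hQB : QBI β p (fun x => x ^ α)) :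
    ∃ ε : ℝ, 0 < ε ∧ ε < p * (β + 1) ∧ QBI β (p - ε) (fun x => x ^ α) :=
  power_weight_openness_I_general p β α hQB
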